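/- arXiv:1307.4203 — 2 statements merged into one kernel-verified Lean document; each statement's English description precedes it below -/
import Mathlib

section
/- Let G ⊆ ℂ be a simply connected domain whose boundary contains more than one point, and let ψ be a univalent analytic map from the open unit disk D onto G. If ψ extends continuously to the closed unit disk, then every boundary point of G is accessible, i.e., ∂G = ∂ₐG. -/
/-- `J` is a crosscut of `G`: `J = γ((0,1))` for a continuous injective
`γ : [0,1] → ℂ` with `γ((0,1)) ⊆ G` and endpoints `γ 0, γ 1 ∈ ∂G`. -/
def IsCrosscut (G J : Set ℂ) : Prop :=
  ∃ γ : ℝ → ℂ, ContinuousOn γ (Set.Icc 0 1) ∧ Set.InjOn γ (Set.Icc 0 1) ∧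
    J = γ '' Set.Ioo 0 1 ∧ J ⊆ G ∧ γ 0 ∈ frontier G ∧ γ 1 ∈ frontier G

/-- The set `∂ₐG` of accessible boundary points of `G`. -/
def accessiblePts (G : Set ℂ) : Set ℂ :=
  {a | a ∈ frontier G ∧ ∃ γ : ℝ → ℂ, ContinuousOn γ (Set.Icc 0 1) ∧
    Set.InjOn γ (Set.Icc 0 1) ∧ γ '' Set.Ico 0 1 ⊆ G ∧ γ 1 = a}

/-- The set `∂ₙG = ∂G \ ∂ₐG` of non-accessible boundary points of `G`. -/
def nonAccessiblePts (G : Set ℂ) : Set ℂ := frontier G \ accessiblePts G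

/-- The set `∂ₛₙG` of semi-unreachable boundary points of `G`. -/
def semiUnreachablePts (G : Set ℂ) : Set ℂ :=
  {a | a ∈ frontier G ∧ ∃ J U V : Set ℂ, IsCrosscut G J ∧
    IsOpen U ∧ IsOpen V ∧ IsConnected U ∧ IsConnected V ∧ Disjoint U V ∧
    G \ J = U ∪ V ∧ a ∈ (nonAccessiblePts U ∪ nonAccessiblePts V) \ J}

/-- `ψ` extends continuously to the closed unit disk. -/
def ExtendsContinuously (ψ : ℂ → ℂ) : Prop :=
  ∃ Ψ : ℂ → ℂ, ContinuousOn Ψ (Metric.closedBall (0 : ℂ) 1) ∧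
    Set.EqOn Ψ ψ (Metric.ball (0 : ℂ) 1)

/-! Every boundary point of `G = ψ(𝔻)` lies in the compact set `Ψ(𝔻̄)` that contains `G`, hence
is `Ψ w` for some `w` on the unit circle, since `Ψ = ψ` maps the open disk into `G`. The image under
`Ψ` of the radius `[0, w]` is then an injective arc that stays in `G` until it ends at that point. -/

open Set Metric

theorem closure_image_subset_image_of_eqOn {X Y : Type*} [TopologicalSpace X]
    [TopologicalSpace Y] [T2Space Y] {ψ Ψ : X → Y} {s K : Set X} (hK : IsCompact K)
    (hsK : s ⊆ K) (hΨ : ContinuousOn Ψ K) (hΨψ : EqOn Ψ ψ s) :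
    closure (ψ '' s) ⊆ Ψ '' K :=
  closure_minimal (hΨψ.image_eq ▸ image_mono hsK) (hK.image_of_continuousOn hΨ).isClosed

theorem frontier_subset_image_sphere {G : Set ℂ} (hG : IsOpen G) {ψ Ψ : ℂ → ℂ}
    (hψ : ψ '' ball 0 1 = G) (hΨ : ContinuousOn Ψ (closedBall 0 1))
    (hΨψ : EqOn Ψ ψ (ball 0 1)) :
    frontier G ⊆ Ψ '' sphere 0 1 := by
  intro a ha
  obtain ⟨w, hw, rfl⟩ : a ∈ Ψ '' closedBall 0 1 :=
    closure_image_subset_image_of_eqOn (isCompact_closedBall 0 1) ball_subset_closedBall hΨ hΨψ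
      (hψ ▸ frontier_subset_closure ha)
  have hw_ball : w ∉ ball 0 1 := fun hw_ball ↦ by
    have : Ψ w ∈ G := hψ ▸ hΨψ hw_ball ▸ mem_image_of_mem ψ hw_ball
    exact (hG.inter_frontier_eq.subset ⟨this, ha⟩).elim
  exact ⟨w, closedBall_sdiff_ball (x := (0 : ℂ)) ▸ ⟨hw, hw_ball⟩, rfl⟩

theorem mem_accessiblePts_of_injOn_Ico {G : Set ℂ} {γ : ℝ → ℂ} (ha : γ 1 ∈ frontier G)
    (hG : IsOpen G) (hγ : ContinuousOn γ (Icc 0 1)) (hγ_inj : InjOn γ (Ico 0 1))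
    (hγG : γ '' Ico 0 1 ⊆ G) :
    γ 1 ∈ accessiblePts G := by
  have hγ1 : γ 1 ∉ γ '' Ico 0 1 := fun h ↦
    (hG.inter_frontier_eq.subset ⟨hγG h, ha⟩).elim
  refine ⟨ha, γ, hγ, ?_, hγG, rfl⟩
  rw [← Ico_insert_right zero_le_one, injOn_insert fun h ↦ lt_irrefl _ h.2]
  exact ⟨hγ_inj, hγ1⟩

theorem norm_ofReal_mul_of_norm_eq_one {w : ℂ} (hw : ‖w‖ = 1) (t : ℝ) : ‖(t : ℂ) * w‖ = |t| := by
  rw [norm_mul, hw, mul_one, Complex.norm_real, Real.norm_eq_abs]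

theorem mapsTo_ofReal_mul_Ico_ball {w : ℂ} (hw : ‖w‖ = 1) :
    MapsTo (fun t : ℝ ↦ (t : ℂ) * w) (Ico 0 1) (ball 0 1) := fun t ht ↦ by
  rw [mem_ball_zero_iff, norm_ofReal_mul_of_norm_eq_one hw, abs_of_nonneg ht.1]
  exact ht.2

theorem mapsTo_ofReal_mul_Icc_closedBall {w : ℂ} (hw : ‖w‖ = 1) :
    MapsTo (fun t : ℝ ↦ (t : ℂ) * w) (Icc 0 1) (closedBall 0 1) := fun t ht ↦ by
  rw [mem_closedBall_zero_iff, norm_ofReal_mul_of_norm_eq_one hw, abs_of_nonneg ht.1]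
  exact ht.2

theorem ofReal_mul_injective {w : ℂ} (hw : w ≠ 0) : Function.Injective fun t : ℝ ↦ (t : ℂ) * w :=
  fun _ _ h ↦ Complex.ofReal_injective (mul_right_cancel₀ hw h)

theorem frontier_eq_accessible_of_psi_extends_general
    (G : Set ℂ) (hGopen : IsOpen G)
    (ψ : ℂ → ℂ)
    (hψi : Set.InjOn ψ (Metric.ball (0 : ℂ) 1))
    (hψs : ψ '' Metric.ball (0 : ℂ) 1 = G)
    (hext : ExtendsContinuously ψ) :
    frontier G = accessiblePts G := by
  obtain ⟨Ψ, hΨ, hΨψ⟩ := hext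
  refine Subset.antisymm (fun a ha ↦ ?_) fun a ha ↦ ha.1
  obtain ⟨w, hw, rfl⟩ := frontier_subset_image_sphere hGopen hψs hΨ hΨψ ha
  have hw1 : ‖w‖ = 1 := mem_sphere_zero_iff_norm.1 hw
  have hray := mapsTo_ofReal_mul_Ico_ball hw1
  have hpath : EqOn (fun t : ℝ ↦ Ψ (t * w)) (fun t : ℝ ↦ ψ (t * w)) (Ico 0 1) :=
    fun t ht ↦ hΨψ (hray ht)
  have hinj : InjOn (fun t : ℝ ↦ Ψ (t * w)) (Ico 0 1) :=
    (hψi.comp (ofReal_mul_injective (norm_ne_zero_iff.1 (hw1 ▸ one_ne_zero))).injOn hray).congr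
      hpath.symm
  have hpathG : (fun t : ℝ ↦ Ψ (t * w)) '' Ico 0 1 ⊆ G := by
    rw [hpath.image_eq, ← hψs]
    exact ((mapsTo_image ψ _).comp hray).image_subset
  simpa using mem_accessiblePts_of_injOn_Ico (γ := fun t : ℝ ↦ Ψ (t * w)) (by simpa using ha)
    hGopen (hΨ.comp (by fun_prop) (mapsTo_ofReal_mul_Icc_closedBall hw1)) hinj hpathG

theorem frontier_eq_accessible_of_psi_extends
    (G : Set ℂ) (hGopen : IsOpen G) (hGconn : IsConnected G)
    (hGsc : SimplyConnectedSpace ↥G) (hGbd : (frontier G).Nontrivial)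
    (ψ : ℂ → ℂ) (hψd : DifferentiableOn ℂ ψ (Metric.ball (0 : ℂ) 1))
    (hψi : Set.InjOn ψ (Metric.ball (0 : ℂ) 1))
    (hψs : ψ '' Metric.ball (0 : ℂ) 1 = G)
    (hext : ExtendsContinuously ψ) :
    frontier G = accessiblePts G :=
  frontier_eq_accessible_of_psi_extends_general G hGopen ψ hψi hψs hext
end

section
/- If G ⊆ ℂ is a Jordan domain, then the set ∂ₐG of accessible boundary points of G is dense in ∂G. -/
/-- `Γ` is a Jordan curve: the image of an injective continuous map
from the unit circle into `ℂ`. -/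
def IsJordanCurve (Γ : Set ℂ) : Prop :=
  ∃ f : ℂ → ℂ, ContinuousOn f (Metric.sphere (0 : ℂ) 1) ∧
    Set.InjOn f (Metric.sphere (0 : ℂ) 1) ∧ Γ = f '' Metric.sphere (0 : ℂ) 1

/-- `G` is a Jordan domain: a bounded nonempty open connected set that is a
connected component of the complement of a Jordan curve `Γ` with `∂G = Γ`. -/
def IsJordanDomain (G : Set ℂ) : Prop :=
  IsOpen G ∧ IsConnected G ∧ Bornology.IsBounded G ∧
    ∃ Γ : Set ℂ, IsJordanCurve Γ ∧ frontier G = Γ ∧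
      ∃ z ∈ G, G = connectedComponentIn Γᶜ z

open Set AffineMap

theorem exists_first_exit_of_isOpen {X : Type*} [TopologicalSpace X] {G : Set X}
    (hG : IsOpen G) {f : ℝ → X} (hf : ContinuousOn f (Icc 0 1)) (h0 : f 0 ∈ G)
    (h1 : f 1 ∉ G) : ∃ t ∈ Ioc (0 : ℝ) 1, f '' Ico 0 t ⊆ G ∧ f t ∈ frontier G := by
  set S := Icc 0 1 ∩ f ⁻¹' Gᶜ
  have hS : IsClosed S := hf.preimage_isClosed_of_isClosed isClosed_Icc hG.isClosed_compl
  have hbdd : BddBelow S := ⟨0, fun t ht => ht.1.1⟩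
  obtain ⟨⟨ht0, ht1⟩, hexit⟩ : sInf S ∈ S := hS.csInf_mem ⟨1, ⟨zero_le_one, le_rfl⟩, h1⟩ hbdd
  have hpos : 0 < sInf S := ht0.lt_of_ne fun h => hexit (h ▸ h0)
  have hbefore : f '' Ico 0 (sInf S) ⊆ G := by
    rintro _ ⟨s, ⟨hs0, hs⟩, rfl⟩
    by_contra hsG
    exact (csInf_le hbdd ⟨⟨hs0, hs.le.trans ht1⟩, hsG⟩).not_gt hs
  have hclosure : f (sInf S) ∈ closure G := by
    refine closure_mono hbefore (ContinuousWithinAt.mem_closure_image ?_ ?_)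
    · exact (hf _ ⟨ht0, ht1⟩).mono (Ico_subset_Icc_self.trans (Icc_subset_Icc_right ht1))
    · rw [closure_Ico hpos.ne]
      exact ⟨ht0, le_rfl⟩
  exact ⟨sInf S, ⟨hpos, ht1⟩, hbefore, hG.frontier_eq ▸ ⟨hclosure, hexit⟩⟩

theorem mem_accessiblePts_of_lineMap_image_subset {G : Set ℂ} (hG : IsOpen G) {z b : ℂ}
    (hseg : lineMap z b '' Ico (0 : ℝ) 1 ⊆ G) (hb : b ∈ frontier G) : b ∈ accessiblePts G := by
  have hz : z ∈ G := by simpa using hseg ⟨0, ⟨le_rfl, zero_lt_one⟩, rfl⟩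
  have hzb : z ≠ b := fun h => (hG.frontier_eq ▸ hb).2 (h ▸ hz)
  exact ⟨hb, lineMap z b, (lineMap_continuous (R := ℝ)).continuousOn,
    (lineMap_injective ℝ hzb).injOn, hseg, lineMap_apply_one z b⟩

theorem accessible_dense_in_frontier_of_jordan
    (G : Set ℂ) (hG : IsJordanDomain G) :
    frontier G ⊆ closure (accessiblePts G) := by
  have hGo : IsOpen G := hG.1
  intro a ha
  refine Metric.mem_closure_iff.mpr fun ε hε => ?_
  obtain ⟨z, hz, hza⟩ := Metric.mem_closure_iff.mp (frontier_subset_closure ha) ε hε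
  have haG : a ∉ G := (hGo.frontier_eq ▸ ha).2
  obtain ⟨t, ⟨ht0, ht1⟩, hbefore, hexit⟩ := exists_first_exit_of_isOpen (f := lineMap z a) hGo
    lineMap_continuous.continuousOn (by simpa) (by simpa)
  have hseg : lineMap z (lineMap z a t) '' Ico (0 : ℝ) 1 ⊆ G := by
    rintro _ ⟨s, ⟨hs0, hs1⟩, rfl⟩
    rw [lineMap_lineMap_right]
    exact hbefore ⟨s * t, ⟨by positivity, mul_lt_of_lt_one_left ht0 hs1⟩, rfl⟩
  refine ⟨lineMap z a t, mem_accessiblePts_of_lineMap_image_subset hGo hseg hexit, ?_⟩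
  calc dist a (lineMap z a t) = ‖1 - t‖ * dist z a := dist_right_lineMap z a t
    _ ≤ 1 * dist a z := by
        rw [dist_comm z a, Real.norm_of_nonneg (by linarith)]
        gcongr
        linarith
    _ < ε := by rwa [one_mul]
end
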